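/- Let Ω ⊆ ℂ³ be open and σ : Ω → ℂ analytic, and define on {u ∈ Ω : σ(u) ≠ 0} the function Δ := ℘₁₁℘₃₃ − ℘₁₂℘₂₃ − ℘₁₃² + ℘₁₃℘₂₂. Then there exists an analytic function G : Ω → ℂ such that σ(u)³·Δ(u) = G(u) for all u ∈ Ω with σ(u) ≠ 0; that is, Δ has poles of order at most 3 along the zero set of σ, even though each of its individual terms has poles of order 4. -/

import Mathlib

/-- Partial derivative in the `i`-th coordinate direction of a function on `ℂ³`. -/
noncomputable def pd (i : Fin 3) (f : (Fin 3 → ℂ) → ℂ) : (Fin 3 → ℂ) → ℂ :=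
  fun u => fderiv ℂ f u (Pi.single i 1)

/-- The 2-index Kleinian ℘-function `℘_{ij} = −∂ᵢ∂ⱼ log σ`, written out as
`(∂ᵢσ·∂ⱼσ − σ·∂ᵢ∂ⱼσ)/σ²`. -/
noncomputable def wp2 (σ : (Fin 3 → ℂ) → ℂ) (i j : Fin 3) : (Fin 3 → ℂ) → ℂ :=
  fun u => (pd i σ u * pd j σ u - σ u * pd i (pd j σ) u) / (σ u) ^ 2

/-- Baker's genus-three function `Δ = ℘₁₁℘₃₃ − ℘₁₂℘₂₃ − ℘₁₃² + ℘₁₃℘₂₂`. -/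
noncomputable def Delta (σ : (Fin 3 → ℂ) → ℂ) : (Fin 3 → ℂ) → ℂ :=
  fun u => wp2 σ 0 0 u * wp2 σ 2 2 u - wp2 σ 0 1 u * wp2 σ 1 2 u
    - (wp2 σ 0 2 u) ^ 2 + wp2 σ 0 2 u * wp2 σ 1 1 u

/-!
Write `d` for the gradient and `H` for the Hessian of `σ`, so that `σ² ℘ = d dᵀ - σ H`, and let
`Q(X) = X₀₀X₂₂ - X₀₁X₁₂ - X₀₂² + X₀₂X₁₁`, so that `Δ = Q(℘)`. The quadratic form `Q` vanishes on
the rank-one matrix `d dᵀ`; expanding `Q(d dᵀ - σ H)` with the polarization `B` of `Q` gives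
`σ⁴ Δ = -σ B(d dᵀ, H) + σ² Q(H)`, hence `σ³ Δ = σ Q(H) - B(d dᵀ, H)`, which is analytic.
-/

namespace Baker

variable {R : Type*} [CommRing R]

def quadForm (X : Matrix (Fin 3) (Fin 3) R) : R :=
  X 0 0 * X 2 2 - X 0 1 * X 1 2 - X 0 2 ^ 2 + X 0 2 * X 1 1

def polarForm (X Y : Matrix (Fin 3) (Fin 3) R) : R :=
  X 0 0 * Y 2 2 + Y 0 0 * X 2 2 - X 0 1 * Y 1 2 - Y 0 1 * X 1 2
    - 2 * X 0 2 * Y 0 2 + X 0 2 * Y 1 1 + Y 0 2 * X 1 1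

theorem quadForm_vecMulVec_self (v : Fin 3 → R) : quadForm (Matrix.vecMulVec v v) = 0 := by
  simp only [quadForm, Matrix.vecMulVec_apply]
  ring

theorem quadForm_sub_smul (X Y : Matrix (Fin 3) (Fin 3) R) (s : R) :
    quadForm (X - s • Y) = quadForm X - s * polarForm X Y + s ^ 2 * quadForm Y := by
  simp only [quadForm, polarForm, Matrix.sub_apply, Matrix.smul_apply, smul_eq_mul]
  ring

theorem quadForm_smul (X : Matrix (Fin 3) (Fin 3) R) (s : R) :
    quadForm (s • X) = s ^ 2 * quadForm X := by
  simp only [quadForm, Matrix.smul_apply, smul_eq_mul]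
  ring

theorem quadForm_vecMulVec_sub_smul (v : Fin 3 → R) (Y : Matrix (Fin 3) (Fin 3) R) (s : R) :
    quadForm (Matrix.vecMulVec v v - s • Y) =
      s * (s * quadForm Y - polarForm (Matrix.vecMulVec v v) Y) := by
  rw [quadForm_sub_smul, quadForm_vecMulVec_self]
  ring

end Baker

open Baker

theorem AnalyticOnNhd.pd {Ω : Set (Fin 3 → ℂ)} (hΩ : IsOpen Ω) {f : (Fin 3 → ℂ) → ℂ}
    (hf : AnalyticOnNhd ℂ f Ω) (i : Fin 3) : AnalyticOnNhd ℂ (pd i f) Ω :=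
  (ContinuousLinearMap.apply ℂ ℂ (Pi.single i 1 : Fin 3 → ℂ)).comp_analyticOnNhd
    (hf.fderiv_of_isOpen hΩ)

section

variable {E : Type*} [NormedAddCommGroup E] [NormedSpace ℂ E] {Ω : Set E}
  {X Y : E → Matrix (Fin 3) (Fin 3) ℂ}

theorem AnalyticOnNhd.quadForm (hX : ∀ i j, AnalyticOnNhd ℂ (fun u => X u i j) Ω) :
    AnalyticOnNhd ℂ (fun u => quadForm (X u)) Ω := fun u hu => by
  have := fun i j => hX i j u hu
  simp only [Baker.quadForm]
  fun_prop

theorem AnalyticOnNhd.polarForm (hX : ∀ i j, AnalyticOnNhd ℂ (fun u => X u i j) Ω)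
    (hY : ∀ i j, AnalyticOnNhd ℂ (fun u => Y u i j) Ω) :
    AnalyticOnNhd ℂ (fun u => polarForm (X u) (Y u)) Ω := fun u hu => by
  have := fun i j => hX i j u hu
  have := fun i j => hY i j u hu
  simp only [Baker.polarForm]
  fun_prop

end

noncomputable def pdVec (σ : (Fin 3 → ℂ) → ℂ) (u : Fin 3 → ℂ) : Fin 3 → ℂ := fun i => pd i σ u

noncomputable def pdMatrix (σ : (Fin 3 → ℂ) → ℂ) (u : Fin 3 → ℂ) : Matrix (Fin 3) (Fin 3) ℂ :=
  Matrix.of fun i j => pd i (pd j σ) u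

theorem sq_smul_wp2 (σ : (Fin 3 → ℂ) → ℂ) {u : Fin 3 → ℂ} (hu : σ u ≠ 0) :
    σ u ^ 2 • Matrix.of (fun i j => wp2 σ i j u) =
      Matrix.vecMulVec (pdVec σ u) (pdVec σ u) - σ u • pdMatrix σ u := by
  ext i j
  simp only [wp2, pdVec, pdMatrix, Matrix.smul_apply, Matrix.of_apply, Matrix.sub_apply,
    Matrix.vecMulVec_apply, smul_eq_mul]
  field_simp

theorem Delta_eq_quadForm (σ : (Fin 3 → ℂ) → ℂ) (u : Fin 3 → ℂ) :
    Delta σ u = quadForm (Matrix.of (fun i j => wp2 σ i j u)) := rfl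

noncomputable def sigmaCubeDelta (σ : (Fin 3 → ℂ) → ℂ) (u : Fin 3 → ℂ) : ℂ :=
  σ u * quadForm (pdMatrix σ u) - polarForm (Matrix.vecMulVec (pdVec σ u) (pdVec σ u)) (pdMatrix σ u)

theorem pow_three_mul_Delta (σ : (Fin 3 → ℂ) → ℂ) {u : Fin 3 → ℂ} (hu : σ u ≠ 0) :
    σ u ^ 3 * Delta σ u = sigmaCubeDelta σ u := by
  have hσ4 : σ u * (σ u ^ 3 * Delta σ u) = σ u * sigmaCubeDelta σ u := by
    rw [← mul_assoc, ← pow_succ', show σ u ^ 4 = (σ u ^ 2) ^ 2 by ring, Delta_eq_quadForm,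
      ← quadForm_smul, sq_smul_wp2 σ hu, quadForm_vecMulVec_sub_smul, sigmaCubeDelta]
  exact mul_left_cancel₀ hu hσ4

theorem AnalyticOnNhd.sigmaCubeDelta {Ω : Set (Fin 3 → ℂ)} (hΩ : IsOpen Ω)
    {σ : (Fin 3 → ℂ) → ℂ} (hσ : AnalyticOnNhd ℂ σ Ω) :
    AnalyticOnNhd ℂ (sigmaCubeDelta σ) Ω := by
  have hH : ∀ i j, AnalyticOnNhd ℂ (fun u => pdMatrix σ u i j) Ω := fun i j =>
    (hσ.pd hΩ j).pd hΩ i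
  have hd : ∀ i j, AnalyticOnNhd ℂ
      (fun u => Matrix.vecMulVec (pdVec σ u) (pdVec σ u) i j) Ω := fun i j =>
    (hσ.pd hΩ i).mul (hσ.pd hΩ j)
  exact (hσ.mul (.quadForm hH)).sub (.polarForm hd hH)

/-- For `σ` analytic on an open `Ω ⊆ ℂ³`, there is a function `G` analytic on
all of `Ω` with `σ³·Δ = G` on `{σ ≠ 0}`: the function
`Δ = ℘₁₁℘₃₃ − ℘₁₂℘₂₃ − ℘₁₃² + ℘₁₃℘₂₂` has poles of order at most 3 along the
zero set of `σ`, even though each of its terms has poles of order 4. -/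
theorem stmt4 (Ω : Set (Fin 3 → ℂ)) (hΩopen : IsOpen Ω)
    (σ : (Fin 3 → ℂ) → ℂ) (hσ : AnalyticOnNhd ℂ σ Ω) :
    ∃ G : (Fin 3 → ℂ) → ℂ, AnalyticOnNhd ℂ G Ω ∧
      ∀ u ∈ Ω, σ u ≠ 0 → (σ u) ^ 3 * Delta σ u = G u :=
  ⟨sigmaCubeDelta σ, hσ.sigmaCubeDelta hΩopen, fun _ _ hu => pow_three_mul_Delta σ hu⟩
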